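/- Let m > 1 be an integer, and let a, b, c₁, …, c_n be positive integers such that for all i ≠ j, gcd(c_i, c_j) = 1 and for every integer y, gcd(ay+b, ∏_{i<j}(c_i^m − c_j^m)) = 1 and gcd(c_i, (ay+b)^m + (−1)^{n−1}∏_{j≠i} c_j^m) = 1. Fix y ∈ ℤ and let x be a root of g(X) = X(ay+b)^m + ∏_{i=1}^n (X − c_i^m), and k = ℚ(x). Then each ideal (x − c_i^m) of 𝒪_k is an m-th power of a fractional ideal. -/

import Mathlib

/-!
Since `x` is an algebraic integer, everything happens in `𝓞 K`. Let `𝔭` be a prime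
dividing `x - c_i^m`. The coprimality hypotheses keep `𝔭` away from every other factor
`x - c_j^m`, so `x (ay+b)^m = -∏ (x - c_j^m)` gives
`v_𝔭(x - c_i^m) = v_𝔭(x) + m v_𝔭(ay+b)`. If `𝔭 ∣ x` then `𝔭 ∣ c_i`, and reducing
`∏_{j ≠ i} (x - c_j^m)` modulo `x` turns the curve equation into
`x E = ± c_i^m ∏_{j ≠ i} c_j^m` with `E ≡ (ay+b)^m + (-1)^(n-1) ∏_{j ≠ i} c_j^m` modulo `𝔭`;
both `E` and the product are prime to `𝔭`, so `v_𝔭(x) = m v_𝔭(c_i)`. Hence every valuation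
of `(x - c_i^m)` is divisible by `m`.
-/

open Polynomial in
theorem isIntegral_of_mul_add_prod_sub_eq_zero {A B ι : Type*} [CommRing A] [Nontrivial A]
    [CommRing B] [Algebra A B] [Fintype ι] (hι : 1 < Fintype.card ι) (k : A) (d : ι → A)
    {x : B} (hx : x * algebraMap A B k + ∏ i, (x - algebraMap A B (d i)) = 0) :
    IsIntegral A x := by
  have hdeg : (C k * X).degree < (∏ i, (X - C (d i))).degree := by
    rw [degree_eq_natDegree (monic_prod_X_sub_C d _).ne_zero,
      natDegree_finsetProd_X_sub_C_eq_card]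
    exact (degree_C_mul_X_le k).trans_lt (by exact_mod_cast hι)
  refine ⟨_, (monic_prod_X_sub_C d _).add_of_left hdeg, ?_⟩
  rw [← aeval_def]
  simp only [map_add, map_mul, map_prod, map_sub, aeval_X, aeval_C]
  linear_combination hx

theorem Int.not_isUnit_pow_sub_pow_of_pos {u v : ℤ} (hu : 0 < u) (hv : 0 < v) {m : ℕ}
    (hm : 1 < m) : ¬ IsUnit (u ^ m - v ^ m) := by
  rw [← geom_sum₂_mul]
  intro h
  have hsum : (m : ℤ) ≤ ∑ i ∈ Finset.range m, u ^ i * v ^ (m - 1 - i) := by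
    simpa using Finset.card_nsmul_le_sum (Finset.range m) (fun i => u ^ i * v ^ (m - 1 - i)) 1
      fun i _ => one_le_mul_of_one_le_of_one_le (one_le_pow₀ hu) (one_le_pow₀ hv)
  rcases Int.isUnit_iff.mp (isUnit_of_mul_isUnit_left h) with h1 | h1 <;> omega

theorem UniqueFactorizationMonoid.exists_eq_pow_of_dvd_count {α : Type*}
    [CommMonoidWithZero α] [NormalizationMonoid α] [UniqueFactorizationMonoid α]
    [Subsingleton αˣ] [DecidableEq α] {a : α} (ha : a ≠ 0) {k : ℕ}
    (h : ∀ p ∈ normalizedFactors a, k ∣ (normalizedFactors a).count p) :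
    ∃ b, a = b ^ k := by
  obtain ⟨u, hu⟩ := Multiset.exists_smul_of_dvd_count _ h
  refine ⟨u.prod, ?_⟩
  rw [← Multiset.prod_nsmul, ← hu]
  exact (associated_iff_eq.mp (prod_normalizedFactors ha)).symm

open UniqueFactorizationMonoid

section DedekindDomain

variable {R : Type*} [CommRing R] [IsDedekindDomain R] [DecidableEq (Ideal R)] {p : Ideal R}

theorem count_normalizedFactors_span_mul {x y : R} (hx : x ≠ 0) (hy : y ≠ 0) :
    (normalizedFactors (Ideal.span {x * y})).count p =
      (normalizedFactors (Ideal.span {x})).count p +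
        (normalizedFactors (Ideal.span {y})).count p := by
  rw [← Ideal.span_singleton_mul_span_singleton, normalizedFactors_mul, Multiset.count_add] <;>
    simpa

theorem count_normalizedFactors_span_pow (x : R) (k : ℕ) :
    (normalizedFactors (Ideal.span {x ^ k})).count p =
      k * (normalizedFactors (Ideal.span {x})).count p := by
  rw [← Ideal.span_singleton_pow, normalizedFactors_pow, Multiset.count_nsmul]

theorem count_normalizedFactors_span_eq_zero {x : R} (hx : x ∉ p) :
    (normalizedFactors (Ideal.span {x})).count p = 0 :=
  Multiset.count_eq_zero.mpr fun hp => hx <|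
    (Ideal.span_singleton_le_iff_mem _).mp (Ideal.le_of_dvd (dvd_of_mem_normalizedFactors hp))

theorem count_normalizedFactors_span_eq_of_associated_mul {x y e w : R}
    (h : Associated (x * e) (y * w)) (hx : x ≠ 0) (he : e ∉ p) (hw : w ∉ p) :
    (normalizedFactors (Ideal.span {x})).count p =
      (normalizedFactors (Ideal.span {y})).count p := by
  have he0 : e ≠ 0 := fun h0 => he (h0 ▸ p.zero_mem)
  have hw0 : w ≠ 0 := fun h0 => hw (h0 ▸ p.zero_mem)
  have hy : y ≠ 0 := by
    rintro rfl
    exact mul_ne_zero hx he0 (h.eq_zero_iff.mpr (zero_mul w))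
  have := congrArg (fun I => (normalizedFactors I).count p)
    (Ideal.span_singleton_eq_span_singleton.mpr h)
  simpa only [count_normalizedFactors_span_mul hx he0, count_normalizedFactors_span_mul hy hw0,
    count_normalizedFactors_span_eq_zero he, count_normalizedFactors_span_eq_zero hw,
    add_zero] using this

end DedekindDomain

section PowerCurve

open Finset

variable {R ι : Type*} [CommRing R] [Fintype ι] {m : ℕ} {χ β : R} {γ : ι → R}

theorem sub_pow_notMem_of_sub_pow_mem (hrel : χ * β ^ m + ∏ j, (χ - γ j ^ m) = 0)
    (hγ : Pairwise fun i j => IsCoprime (γ i) (γ j))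
    (hβγ : Pairwise fun i j => IsCoprime β (γ i ^ m - γ j ^ m))
    {p : Ideal R} [hp : p.IsPrime] {i j : ι} (hij : i ≠ j) (hi : χ - γ i ^ m ∈ p) :
    χ - γ j ^ m ∉ p := by
  intro hj
  have hχβ : χ * β ^ m ∈ p := by
    rw [eq_neg_of_add_eq_zero_left hrel]
    exact p.neg_mem_iff.mpr (hp.prod_mem_iff.mpr ⟨j, mem_univ j, hj⟩)
  rcases hp.mem_or_mem hχβ with hχ | hβ
  · have hγi : γ i ∈ p := hp.mem_of_pow_mem m (by simpa using sub_mem hχ hi)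
    have hγj : γ j ∈ p := hp.mem_of_pow_mem m (by simpa using sub_mem hχ hj)
    exact Ideal.IsPrime.notMem_of_isCoprime_of_mem (hγ hij) hγi hγj
  · exact Ideal.IsPrime.notMem_of_isCoprime_of_mem (hβγ hij.symm) (hp.mem_of_pow_mem m hβ)
      (by simpa using sub_mem hi hj)

variable [IsDedekindDomain R] [DecidableEq ι]

theorem dvd_count_normalizedFactors_span_of_sub_pow_mem [DecidableEq (Ideal R)]
    (hrel : χ * β ^ m + ∏ j, (χ - γ j ^ m) = 0)
    (hγ : Pairwise fun i j => IsCoprime (γ i) (γ j)) {i : ι}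
    (hD : IsCoprime (γ i) (β ^ m + (-1) ^ (Fintype.card ι - 1) * ∏ j ∈ univ.erase i, γ j ^ m))
    (hχ0 : χ ≠ 0) {p : Ideal R} [hp : p.IsPrime] (hi : χ - γ i ^ m ∈ p) :
    m ∣ (normalizedFactors (Ideal.span {χ})).count p := by
  by_cases hχ : χ ∈ p
  swap
  · rw [count_normalizedFactors_span_eq_zero hχ]
    exact dvd_zero m
  have hγi : γ i ∈ p := hp.mem_of_pow_mem m (by simpa using sub_mem hχ hi)
  set P := ∏ j ∈ univ.erase i, γ j ^ m
  set s : R := (-1) ^ (Fintype.card ι - 1)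
  obtain ⟨A, hA⟩ : χ ∣ ∏ j ∈ univ.erase i, (χ - γ j ^ m) - s * P := by
    have := Polynomial.sub_dvd_eval_sub χ 0
      (∏ j ∈ univ.erase i, (Polynomial.X - Polynomial.C (γ j ^ m)))
    simp only [Polynomial.eval_prod, Polynomial.eval_sub, Polynomial.eval_X, Polynomial.eval_C,
      sub_zero, zero_sub, prod_neg, card_erase_of_mem (mem_univ i), card_univ] at this
    exact this
  have hkey : χ * (β ^ m + s * P + (χ - γ i ^ m) * A) = s * (γ i ^ m * P) := by
    rw [← mul_prod_erase univ (fun j => χ - γ j ^ m) (mem_univ i)] at hrel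
    linear_combination hrel - (χ - γ i ^ m) * hA
  have hE : β ^ m + s * P + (χ - γ i ^ m) * A ∉ p := fun hE =>
    Ideal.IsPrime.notMem_of_isCoprime_of_mem hD hγi
      (by simpa using sub_mem hE (p.mul_mem_right A hi))
  have hP : P ∉ p := by
    rw [hp.prod_mem_iff]
    rintro ⟨j, hj, hjp⟩
    exact Ideal.IsPrime.notMem_of_isCoprime_of_mem (hγ (ne_of_mem_erase hj))
      (hp.mem_of_pow_mem m hjp) hγi
  have hassoc : Associated (χ * (β ^ m + s * P + (χ - γ i ^ m) * A)) (γ i ^ m * P) := by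
    rw [hkey]
    exact associated_unit_mul_left _ _ (isUnit_neg_one.pow _)
  rw [count_normalizedFactors_span_eq_of_associated_mul hassoc hχ0 hE hP,
    count_normalizedFactors_span_pow]
  exact dvd_mul_right m _

theorem exists_span_sub_pow_eq_pow (hrel : χ * β ^ m + ∏ j, (χ - γ j ^ m) = 0)
    (hβ0 : β ≠ 0) (hγ0 : ∀ j, γ j ≠ 0) (hγ : Pairwise fun i j => IsCoprime (γ i) (γ j))
    (hβγ : Pairwise fun i j => IsCoprime β (γ i ^ m - γ j ^ m)) (i : ι)
    (hD : IsCoprime (γ i) (β ^ m + (-1) ^ (Fintype.card ι - 1) * ∏ j ∈ univ.erase i, γ j ^ m)) :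
    ∃ I : Ideal R, Ideal.span {χ - γ i ^ m} = I ^ m := by
  classical
  have hχ0 : χ ≠ 0 := by
    rintro rfl
    obtain ⟨j, -, hj⟩ := prod_eq_zero_iff.mp (by simpa using hrel)
    simp only [neg_eq_zero, pow_eq_zero_iff', ne_eq] at hj
    exact hγ0 j hj.1
  have hξ0 : χ - γ i ^ m ≠ 0 := by
    intro h0
    rw [← mul_prod_erase univ (fun j => χ - γ j ^ m) (mem_univ i), h0, zero_mul,
      add_zero] at hrel
    exact mul_ne_zero hχ0 (pow_ne_zero m hβ0) hrel
  refine exists_eq_pow_of_dvd_count (by simpa using hξ0) fun p hp => ?_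
  have hpP : p.IsPrime := Ideal.isPrime_of_prime (prime_of_normalized_factor p hp)
  have hi : χ - γ i ^ m ∈ p :=
    (Ideal.span_singleton_le_iff_mem _).mp (Ideal.le_of_dvd (dvd_of_mem_normalizedFactors hp))
  have hQ : ∏ j ∈ univ.erase i, (χ - γ j ^ m) ∉ p := by
    rw [hpP.prod_mem_iff]
    rintro ⟨j, hj, hjp⟩
    exact sub_pow_notMem_of_sub_pow_mem hrel hγ hβγ (ne_of_mem_erase hj).symm hi hjp
  have hassoc :
      Associated ((χ - γ i ^ m) * ∏ j ∈ univ.erase i, (χ - γ j ^ m)) (χ * β ^ m * 1) := by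
    rw [mul_prod_erase univ (fun j => χ - γ j ^ m) (mem_univ i), mul_one,
      eq_neg_of_add_eq_zero_right hrel]
    exact (Associated.refl _).neg_left
  rw [count_normalizedFactors_span_eq_of_associated_mul hassoc hξ0 hQ hpP.one_notMem,
    count_normalizedFactors_span_mul hχ0 (pow_ne_zero m hβ0), count_normalizedFactors_span_pow]
  exact dvd_add (dvd_count_normalizedFactors_span_of_sub_pow_mem hrel hγ hD hχ0 hi)
    (dvd_mul_right m _)

end PowerCurve

open NumberField in
theorem stmt_17_general (m n : ℕ) (hm : 1 < m) (hn : 1 < n)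
    (a b : ℤ) (c : Fin n → ℤ) (hcpos : ∀ i, 0 < c i)
    (hcc : ∀ i j, i ≠ j → IsCoprime (c i) (c j))
    (h1 : ∀ y : ℤ, ∀ i j : Fin n, i ≠ j →
      IsCoprime (a * y + b) (c i ^ m - c j ^ m))
    (h2 : ∀ y : ℤ, ∀ i, IsCoprime (c i)
      ((a * y + b) ^ m + (-1) ^ (n - 1) * ∏ j ∈ Finset.univ.erase i, c j ^ m))
    (y : ℤ)
    (K : Type*) [Field K] [NumberField K] (x : K)
    (hx : x * ((a * y + b : ℤ) : K) ^ m + ∏ i, (x - (c i : K) ^ m) = 0) :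
    ∀ i, ∃ I : FractionalIdeal (nonZeroDivisors (RingOfIntegers K)) K,
      FractionalIdeal.spanSingleton (nonZeroDivisors (RingOfIntegers K))
        (x - (c i : K) ^ m) = I ^ m := by
  intro i
  have hβ0 : a * y + b ≠ 0 := fun h0 =>
    Int.not_isUnit_pow_sub_pow_of_pos (hcpos ⟨0, by omega⟩) (hcpos ⟨1, hn⟩) hm <|
      isCoprime_zero_left.mp (h0 ▸ h1 y _ _ (by simp [Fin.ext_iff]))
  have hxint : IsIntegral ℤ x :=
    isIntegral_of_mul_add_prod_sub_eq_zero (by simpa using hn) ((a * y + b) ^ m) (c · ^ m)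
      (by simpa using hx)
  let χ : 𝓞 K := ⟨x, hxint⟩
  have hχ : algebraMap (𝓞 K) K χ = x := rfl
  have hrel : χ * ((a * y + b : ℤ) : 𝓞 K) ^ m + ∏ j, (χ - (c j : 𝓞 K) ^ m) = 0 :=
    RingOfIntegers.ext (by simpa [hχ] using hx)
  obtain ⟨I, hI⟩ := exists_span_sub_pow_eq_pow hrel (by exact_mod_cast hβ0)
    (fun j => by exact_mod_cast (hcpos j).ne') (fun j k hjk => (hcc j k hjk).intCast)
    (fun j k hjk => by exact_mod_cast (h1 y j k hjk).intCast) i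
    (by simpa using (h2 y i).intCast (R := 𝓞 K))
  refine ⟨I, ?_⟩
  rw [← FractionalIdeal.coeIdeal_pow, ← hI, FractionalIdeal.coeIdeal_span_singleton]
  simp [hχ]

open NumberField in
/-- Specialization of the coprimality lemma to the curve
`x(ay+b)^m = −∏ (x − c_i^m)`: under the stated positivity and coprimality conditions,
for any integer `y`, if `x` is a root of `X(ay+b)^m + ∏ (X − c_i^m)` and `K = ℚ(x)`,
then each ideal `(x − c_i^m)` of `𝒪_K` is an `m`-th power of a fractional ideal. -/
theorem stmt_17 (m n : ℕ) (hm : 1 < m) (hn : 1 < n)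
    (a b : ℤ) (c : Fin n → ℤ) (hapos : 0 < a) (hbpos : 0 < b) (hcpos : ∀ i, 0 < c i)
    (hcc : ∀ i j, i ≠ j → IsCoprime (c i) (c j))
    (h1 : ∀ y : ℤ, ∀ i j : Fin n, i ≠ j →
      IsCoprime (a * y + b) (c i ^ m - c j ^ m))
    (h2 : ∀ y : ℤ, ∀ i, IsCoprime (c i)
      ((a * y + b) ^ m + (-1) ^ (n - 1) * ∏ j ∈ Finset.univ.erase i, c j ^ m))
    (y : ℤ)
    (K : Type*) [Field K] [NumberField K] (x : K)
    (hx : x * ((a * y + b : ℤ) : K) ^ m + ∏ i, (x - (c i : K) ^ m) = 0)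
    (hgen : IntermediateField.adjoin ℚ {x} = ⊤) :
    ∀ i, ∃ I : FractionalIdeal (nonZeroDivisors (RingOfIntegers K)) K,
      FractionalIdeal.spanSingleton (nonZeroDivisors (RingOfIntegers K))
        (x - (c i : K) ^ m) = I ^ m :=
  stmt_17_general m n hm hn a b c hcpos hcc h1 h2 y K x hx
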